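/- arXiv:2602.05497 — 3 statements merged into one kernel-verified Lean document; each statement's English description precedes it below -/
import Mathlib

section
/- Let α₁, α₂, α₃ : ℝ → ℝ be continuous with 0 ≤ αⱼ(t) ≤ α₀ for all t, let ζ ≥ 1, and set z = ζ + i. For x, y ∈ ℝ³ define the stretched coordinates x̃ⱼ = xⱼ + z∫₀^{xⱼ} αⱼ(t)dt and ỹⱼ analogously, and let d(x̃,ỹ)² = Σⱼ (x̃ⱼ − ỹⱼ)². Then |x − y|² ≤ |d(x̃,ỹ)²| ≤ ((1+ζα₀)² + α₀²)·|x − y|². -/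
open Complex intervalIntegral

/-!
Write `∫_y^x α = a (x - y)` with `0 ≤ a ≤ α₀` (the mean value of `α` over the interval), so that
`x̃ - ỹ = (x - y)(1 + z a)` coordinatewise. Then `d(x̃, ỹ)²` is a combination of the numbers
`(1 + z aⱼ)²` with nonnegative weights `(xⱼ - yⱼ)²`. Each of these numbers has real part
`(1 + ζ a)² - a² ≥ 1` and modulus `(1 + ζ a)² + a² ≤ (1 + ζ α₀)² + α₀²`, and the two bounds
follow from `Re w ≤ ‖w‖` and the triangle inequality.
-/

theorem exists_mem_Icc_integral_eq_mul_sub {f : ℝ → ℝ} {C a b : ℝ}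
    (hf₀ : ∀ t ∈ Set.uIcc a b, 0 ≤ f t) (hfC : ∀ t ∈ Set.uIcc a b, f t ≤ C) :
    ∃ c ∈ Set.Icc 0 C, ∫ t in a..b, f t = c * (b - a) := by
  have hC : 0 ≤ C := (hf₀ a Set.left_mem_uIcc).trans (hfC a Set.left_mem_uIcc)
  rcases eq_or_ne a b with rfl | hab
  · exact ⟨0, ⟨le_rfl, hC⟩, by simp⟩
  have hba : b - a ≠ 0 := sub_ne_zero.2 hab.symm
  refine ⟨(∫ t in a..b, f t) / (b - a), ⟨?_, ?_⟩, by field_simp⟩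
  · rcases le_total a b with h | h
    · exact div_nonneg (integral_nonneg h fun t ht => hf₀ t (Set.Icc_subset_uIcc ht))
        (sub_nonneg.2 h)
    · rw [integral_symm, ← neg_div_neg_eq, neg_neg, neg_sub]
      exact div_nonneg (integral_nonneg h fun t ht => hf₀ t (Set.Icc_subset_uIcc' ht))
        (sub_nonneg.2 h)
  · have hnorm : |∫ t in a..b, f t| ≤ C * |b - a| :=
      norm_integral_le_of_norm_le_const fun t ht => by
        rw [Real.norm_eq_abs, abs_of_nonneg (hf₀ t (Set.uIoc_subset_uIcc ht))]
        exact hfC t (Set.uIoc_subset_uIcc ht)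
    calc (∫ t in a..b, f t) / (b - a) ≤ |(∫ t in a..b, f t) / (b - a)| := le_abs_self _
      _ = |∫ t in a..b, f t| / |b - a| := abs_div _ _
      _ ≤ C := div_le_of_le_mul₀ (abs_nonneg _) hC hnorm

theorem one_le_re_one_add_mul_sq {ζ a : ℝ} (hζ : 1 ≤ ζ) (ha : 0 ≤ a) :
    1 ≤ ((1 + (ζ + I) * a) ^ 2).re := by
  have hre : ((1 + (ζ + I) * a) ^ 2).re = (1 + ζ * a) ^ 2 - a ^ 2 := by
    simp [sq]
  rw [hre]
  nlinarith [mul_nonneg (sub_nonneg.2 hζ) (sq_nonneg a), mul_nonneg (by linarith : 0 ≤ ζ) ha]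

theorem norm_one_add_mul_sq_le {ζ a α₀ : ℝ} (hζ : 0 ≤ ζ) (ha : 0 ≤ a) (haα : a ≤ α₀) :
    ‖(1 + (ζ + I) * a) ^ 2‖ ≤ (1 + ζ * α₀) ^ 2 + α₀ ^ 2 := by
  have hnorm : ‖(1 + (ζ + I) * a) ^ 2‖ = (1 + ζ * a) ^ 2 + a ^ 2 := by
    rw [norm_pow, ← normSq_eq_norm_sq, normSq_apply]
    simp; ring
  rw [hnorm]
  gcongr

theorem sum_le_norm_sum_mul_of_one_le_re {ι : Type*} (s : Finset ι) (r : ι → ℝ) (w : ι → ℂ)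
    (hr : ∀ i ∈ s, 0 ≤ r i) (hw : ∀ i ∈ s, 1 ≤ (w i).re) :
    ∑ i ∈ s, r i ≤ ‖∑ i ∈ s, (r i : ℂ) * w i‖ :=
  calc ∑ i ∈ s, r i ≤ ∑ i ∈ s, r i * (w i).re :=
        Finset.sum_le_sum fun i hi => le_mul_of_one_le_right (hr i hi) (hw i hi)
    _ = (∑ i ∈ s, (r i : ℂ) * w i).re := by simp [re_sum]
    _ ≤ ‖∑ i ∈ s, (r i : ℂ) * w i‖ := re_le_norm _

theorem norm_sum_mul_le_mul_sum {ι : Type*} (s : Finset ι) (r : ι → ℝ) (w : ι → ℂ) {M : ℝ}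
    (hr : ∀ i ∈ s, 0 ≤ r i) (hw : ∀ i ∈ s, ‖w i‖ ≤ M) :
    ‖∑ i ∈ s, (r i : ℂ) * w i‖ ≤ M * ∑ i ∈ s, r i :=
  calc ‖∑ i ∈ s, (r i : ℂ) * w i‖ ≤ ∑ i ∈ s, ‖(r i : ℂ) * w i‖ := norm_sum_le _ _
    _ ≤ ∑ i ∈ s, M * r i := Finset.sum_le_sum fun i hi => by
        rw [norm_mul, norm_real, Real.norm_of_nonneg (hr i hi), mul_comm]
        exact mul_le_mul_of_nonneg_right (hw i hi) (hr i hi)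
    _ = M * ∑ i ∈ s, r i := (Finset.mul_sum _ _ _).symm

/-- Two-sided bound for the square of the PML complex distance. -/
theorem stmt_2 (α : Fin 3 → ℝ → ℝ) (α₀ ζ : ℝ)
    (hcont : ∀ j, Continuous (α j))
    (hnn : ∀ j t, 0 ≤ α j t) (hub : ∀ j t, α j t ≤ α₀)
    (hζ : 1 ≤ ζ) (x y : Fin 3 → ℝ) :
    let z : ℂ := ζ + Complex.I
    let xt : Fin 3 → ℂ := fun j => (x j : ℂ) + z * (∫ t in (0:ℝ)..(x j), α j t : ℝ)
    let yt : Fin 3 → ℂ := fun j => (y j : ℂ) + z * (∫ t in (0:ℝ)..(y j), α j t : ℝ)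
    let dsq : ℂ := ∑ j, (xt j - yt j) ^ 2
    (∑ j, (x j - y j) ^ 2) ≤ ‖dsq‖ ∧
      ‖dsq‖ ≤ ((1 + ζ * α₀) ^ 2 + α₀ ^ 2) * ∑ j, (x j - y j) ^ 2 := by
  intro z xt yt dsq
  choose a ha hmean using fun j => exists_mem_Icc_integral_eq_mul_sub (a := y j) (b := x j)
    (fun t _ => hnn j t) (fun t _ => hub j t)
  have hdsq : dsq = ∑ j, (((x j - y j) ^ 2 : ℝ) : ℂ) * (1 + z * a j) ^ 2 := by
    refine Finset.sum_congr rfl fun j _ => ?_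
    have hsplit := integral_interval_sub_left
      ((hcont j).intervalIntegrable (μ := MeasureTheory.volume) 0 (x j))
      ((hcont j).intervalIntegrable 0 (y j))
    have hdiff : xt j - yt j = (x j - y j : ℝ) * (1 + z * a j) := by
      calc xt j - yt j = (x j - y j : ℝ) + z * ((∫ t in (0:ℝ)..(x j), α j t) -
            ∫ t in (0:ℝ)..(y j), α j t : ℝ) := by push_cast; ring
        _ = (x j - y j : ℝ) * (1 + z * a j) := by rw [hsplit, hmean j]; push_cast; ring
    rw [hdiff]; push_cast; ring
  rw [hdsq]
  exact ⟨sum_le_norm_sum_mul_of_one_le_re _ _ _ (fun j _ => sq_nonneg _)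
      fun j _ => one_le_re_one_add_mul_sq hζ (ha j).1,
    norm_sum_mul_le_mul_sum _ _ _ (fun j _ => sq_nonneg _)
      fun j _ => norm_one_add_mul_sq_le (by linarith) (ha j).1 (ha j).2⟩
end

section
/- Let ζ ≥ √((λ+2μ)/μ) with Lamé constants μ > 0 and λ + μ > 0. For any α₁, α₂, α₃ ∈ [0, ∞) set sⱼ = 1 + (ζ + i)αⱼ. Then for each j ∈ {1,2,3}, (1 + μ/(λ+μ))·Re( s₁s₂s₃ / sⱼ² ) ≥ (1+ζα₁)(1+ζα₂)(1+ζα₃)/(1+ζαⱼ)² + (μ/(λ+μ))·|sⱼ|^{−2}. -/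
/-!
With `κ = μ / (λ + μ)` the hypothesis on `ζ` reads `1 + κ ≤ κ ζ²`. Writing the inequality for
`sⱼ = s_a` and the other two stretches `s_p`, `s_q`, we have `s_p s_q = 1 + (ζ + i)(p + q) + (ζ + i)² p q`,
and the real product `(1 + ζ p)(1 + ζ q)` has the same expansion with `ζ` in place of `ζ + i`. Since
`p + q` and `p q` are nonnegative, the inequality splits into three inequalities for the coefficients
`1`, `ζ + i`, `(ζ + i)²` divided by `s_a`; each follows from `ζ a ≤ 1 + ζ a` and `1 + κ ≤ κ ζ²`.
-/

open Complex

noncomputable def pmlStretch (ζ a : ℝ) : ℂ := 1 + (ζ + I) * a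

section

variable {κ ζ a p q : ℝ}

@[simp] lemma pmlStretch_re : (pmlStretch ζ a).re = 1 + ζ * a := by simp [pmlStretch]

@[simp] lemma pmlStretch_im : (pmlStretch ζ a).im = a := by simp [pmlStretch]

lemma normSq_pmlStretch : normSq (pmlStretch ζ a) = (1 + ζ * a) ^ 2 + a ^ 2 := by
  rw [normSq_apply, pmlStretch_re, pmlStretch_im]; ring

lemma re_div_pmlStretch (z : ℂ) :
    (z / pmlStretch ζ a).re = (z.re * (1 + ζ * a) + z.im * a) / ((1 + ζ * a) ^ 2 + a ^ 2) := by
  rw [div_re, normSq_pmlStretch, pmlStretch_re, pmlStretch_im, add_div]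

lemma le_re_one_div_pmlStretch (hκ : 0 ≤ κ) (hζ : 0 ≤ ζ) (ha : 0 ≤ a) (hκζ : 1 ≤ κ * ζ ^ 2) :
    1 / (1 + ζ * a) + κ / normSq (pmlStretch ζ a) ≤ (1 + κ) * (1 / pmlStretch ζ a).re := by
  rw [re_div_pmlStretch, normSq_pmlStretch, one_re, one_im,
    div_add_div _ _ (by positivity) (by positivity), mul_div_assoc',
    div_le_div_iff₀ (by positivity) (by positivity)]
  nlinarith [mul_nonneg (mul_nonneg hκ hζ) ha, mul_nonneg (sub_nonneg.2 hκζ) (sq_nonneg a)]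

lemma le_re_div_pmlStretch (hκ : 0 ≤ κ) (hζ : 0 ≤ ζ) (ha : 0 ≤ a) :
    ζ / (1 + ζ * a) ≤ (1 + κ) * ((ζ + I) / pmlStretch ζ a).re := by
  have hb : 0 < 1 + ζ * a := by positivity
  rw [re_div_pmlStretch, mul_div_assoc', div_le_div_iff₀ hb (by positivity)]
  simp only [add_re, add_im, ofReal_re, ofReal_im, I_re, I_im]
  nlinarith [mul_nonneg hκ (mul_nonneg (add_nonneg (mul_nonneg hζ hb.le) ha) hb.le)]

lemma le_re_sq_div_pmlStretch (hκ : 0 ≤ κ) (hζ : 0 ≤ ζ) (ha : 0 ≤ a)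
    (hκζ : 1 + κ ≤ κ * ζ ^ 2) :
    ζ ^ 2 / (1 + ζ * a) ≤ (1 + κ) * ((ζ + I) ^ 2 / pmlStretch ζ a).re := by
  rw [re_div_pmlStretch, mul_div_assoc', div_le_div_iff₀ (by positivity) (by positivity)]
  simp only [sq, mul_re, mul_im, add_re, add_im, ofReal_re, ofReal_im, I_re, I_im]
  nlinarith [mul_nonneg (mul_nonneg hκ hζ) ha, mul_nonneg hζ ha]

lemma le_re_mul_mul_div_pmlStretch_sq (hκ : 0 ≤ κ) (hζ : 0 ≤ ζ) (hκζ : 1 + κ ≤ κ * ζ ^ 2)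
    (ha : 0 ≤ a) (hp : 0 ≤ p) (hq : 0 ≤ q) :
    (1 + ζ * a) * (1 + ζ * p) * (1 + ζ * q) / (1 + ζ * a) ^ 2 + κ * ‖pmlStretch ζ a‖⁻¹ ^ 2
      ≤ (1 + κ) * (pmlStretch ζ a * pmlStretch ζ p * pmlStretch ζ q / pmlStretch ζ a ^ 2).re := by
  have hb : 0 < 1 + ζ * a := by positivity
  have hs : pmlStretch ζ a ≠ 0 := fun h => hb.ne' (by simpa using congrArg re h)
  have hreal : (1 + ζ * a) * (1 + ζ * p) * (1 + ζ * q) / (1 + ζ * a) ^ 2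
      = 1 / (1 + ζ * a) + (p + q) * (ζ / (1 + ζ * a)) + p * q * (ζ ^ 2 / (1 + ζ * a)) := by
    field_simp
    ring
  have hcplx : pmlStretch ζ a * pmlStretch ζ p * pmlStretch ζ q / pmlStretch ζ a ^ 2
      = 1 / pmlStretch ζ a + ((p + q : ℝ) : ℂ) * ((ζ + I) / pmlStretch ζ a)
        + ((p * q : ℝ) : ℂ) * ((ζ + I) ^ 2 / pmlStretch ζ a) := by
    field_simp
    simp only [pmlStretch]
    push_cast
    ring
  rw [hreal, hcplx, inv_pow, ← normSq_eq_norm_sq, add_re, add_re, re_ofReal_mul, re_ofReal_mul]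
  have h₀ := le_re_one_div_pmlStretch hκ hζ ha (by linarith)
  have h₁ := mul_le_mul_of_nonneg_left (le_re_div_pmlStretch hκ hζ ha) (add_nonneg hp hq)
  have h₂ := mul_le_mul_of_nonneg_left (le_re_sq_div_pmlStretch hκ hζ ha hκζ) (mul_nonneg hp hq)
  linear_combination h₀ + h₁ + h₂

end

/-- Elementary complex inequality (Chen–Xiang–Zhang, Lemma 3.1) underlying the
coercivity of the thermoelastic PML sesquilinear form. -/
theorem stmt_8 (lam μ ζ : ℝ) (hμ : 0 < μ) (hlamμ : 0 < lam + μ)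
    (hζ : Real.sqrt ((lam + 2 * μ) / μ) ≤ ζ)
    (α : Fin 3 → ℝ) (hα : ∀ j, 0 ≤ α j) :
    let s : Fin 3 → ℂ := fun j => 1 + (ζ + Complex.I) * (α j : ℂ)
    ∀ j : Fin 3,
      (1 + ζ * α 0) * (1 + ζ * α 1) * (1 + ζ * α 2) / (1 + ζ * α j) ^ 2
          + (μ / (lam + μ)) * ‖s j‖⁻¹ ^ 2
        ≤ (1 + μ / (lam + μ)) * ((s 0 * s 1 * s 2) / (s j) ^ 2).re := by
  intro s j
  obtain ⟨hζ₀, hζsq⟩ := Real.sqrt_le_iff.1 hζ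
  have hκ : 0 ≤ μ / (lam + μ) := (div_pos hμ hlamμ).le
  have hκζ : 1 + μ / (lam + μ) ≤ μ / (lam + μ) * ζ ^ 2 :=
    calc 1 + μ / (lam + μ) = μ / (lam + μ) * ((lam + 2 * μ) / μ) := by field_simp; ring
      _ ≤ μ / (lam + μ) * ζ ^ 2 := mul_le_mul_of_nonneg_left hζsq hκ
  fin_cases j
  · exact le_re_mul_mul_div_pmlStretch_sq hκ hζ₀ hκζ (hα 0) (hα 1) (hα 2)
  · have h := le_re_mul_mul_div_pmlStretch_sq hκ hζ₀ hκζ (hα 1) (hα 0) (hα 2)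
    rwa [mul_comm (1 + ζ * α 1), mul_comm (pmlStretch ζ (α 1))] at h
  · have h := le_re_mul_mul_div_pmlStretch_sq hκ hζ₀ hκζ (hα 2) (hα 0) (hα 1)
    rwa [mul_comm (1 + ζ * α 2), mul_right_comm (1 + ζ * α 0), mul_comm (pmlStretch ζ (α 2)),
      mul_right_comm (pmlStretch ζ (α 0))] at h
end

section
/- Let λ, μ, γ > 0 with λ + μ > 0, let ζ ≥ 0, and suppose α₀ < (λ+μ)/(2γ(λ+2μ)). Then for all α₁, α₂, α₃ ∈ [0, α₀]: ((λ+μ)/(λ+2μ))·(1+ζα₂)(1+ζα₃)/(1+ζα₁) > γ(α₂ + α₃ + 2ζα₂α₃). -/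
/-!
Write `t = (λ+μ)/(λ+2μ)`; the hypothesis on `α₀` says `2γα₀ < t`. Clearing the denominator
`1 + ζα₁`, each of the monomials `α₂ + α₃`, `ζα₂(α₁+α₃)`, `ζα₃(α₁+α₂)`, `2ζ²α₁α₂α₃` on the left
is at most `2α₀` times the matching monomial `1`, `ζα₂`, `ζα₃`, `ζ²α₂α₃` of
`(1+ζα₂)(1+ζα₃)`, and `2γα₀ < t` turns this into the strict inequality.
-/

open Set

lemma coupling_mul_le {ζ A a₁ a₂ a₃ : ℝ} (hζ : 0 ≤ ζ)
    (h₁ : a₁ ∈ Icc 0 A) (h₂ : a₂ ∈ Icc 0 A) (h₃ : a₃ ∈ Icc 0 A) :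
    (a₂ + a₃ + 2 * ζ * a₂ * a₃) * (1 + ζ * a₁) ≤ 2 * A * ((1 + ζ * a₂) * (1 + ζ * a₃)) := by
  obtain ⟨h₁l, h₁r⟩ := h₁
  obtain ⟨h₂l, h₂r⟩ := h₂
  obtain ⟨h₃l, h₃r⟩ := h₃
  have hζa₂ : 0 ≤ ζ * a₂ := mul_nonneg hζ h₂l
  have hζa₃ : 0 ≤ ζ * a₃ := mul_nonneg hζ h₃l
  linarith [mul_nonneg hζa₂ (by linarith : 0 ≤ 2 * A - a₁ - a₃),
    mul_nonneg hζa₃ (by linarith : 0 ≤ 2 * A - a₁ - a₂),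
    mul_nonneg (mul_nonneg hζa₂ hζa₃) (sub_nonneg.mpr h₁r)]

lemma mul_coupling_lt_of_two_mul_lt {γ ζ t A a₁ a₂ a₃ : ℝ} (hγ : 0 ≤ γ) (hζ : 0 ≤ ζ)
    (hA : 2 * γ * A < t)
    (h₁ : a₁ ∈ Icc 0 A) (h₂ : a₂ ∈ Icc 0 A) (h₃ : a₃ ∈ Icc 0 A) :
    γ * (a₂ + a₃ + 2 * ζ * a₂ * a₃) < t * ((1 + ζ * a₂) * (1 + ζ * a₃) / (1 + ζ * a₁)) := by
  have hden : 0 < 1 + ζ * a₁ := by have := mul_nonneg hζ h₁.1; linarith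
  have hnum : 0 < (1 + ζ * a₂) * (1 + ζ * a₃) := by
    have := mul_nonneg hζ h₂.1; have := mul_nonneg hζ h₃.1; positivity
  rw [← mul_div_assoc, lt_div_iff₀ hden]
  calc γ * (a₂ + a₃ + 2 * ζ * a₂ * a₃) * (1 + ζ * a₁)
      ≤ γ * (2 * A * ((1 + ζ * a₂) * (1 + ζ * a₃))) := by
        rw [mul_assoc]; exact mul_le_mul_of_nonneg_left (coupling_mul_le hζ h₁ h₂ h₃) hγ
    _ = 2 * γ * A * ((1 + ζ * a₂) * (1 + ζ * a₃)) := by ring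
    _ < t * ((1 + ζ * a₂) * (1 + ζ * a₃)) := mul_lt_mul_of_pos_right hA hnum

theorem stmt_12_general (lam μ γ ζ α₀ α₁ α₂ α₃ : ℝ)
    (hγ : 0 < γ)
    (hζ : 0 ≤ ζ) (hα₀ : α₀ < (lam + μ) / (2 * γ * (lam + 2 * μ)))
    (h₁ : α₁ ∈ Set.Icc 0 α₀) (h₂ : α₂ ∈ Set.Icc 0 α₀) (h₃ : α₃ ∈ Set.Icc 0 α₀) :
    γ * (α₂ + α₃ + 2 * ζ * α₂ * α₃)
      < ((lam + μ) / (lam + 2 * μ)) * ((1 + ζ * α₂) * (1 + ζ * α₃) / (1 + ζ * α₁)) := by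
  rw [div_mul_eq_div_div_swap, lt_div_iff₀' (by positivity)] at hα₀
  exact mul_coupling_lt_of_two_mul_lt hγ.le hζ hα₀ h₁ h₂ h₃

/-- First-order absorption inequality for the thermoelastic PML form. -/
theorem stmt_12 (lam μ γ ζ α₀ α₁ α₂ α₃ : ℝ)
    (hlam : 0 < lam) (hμ : 0 < μ) (hγ : 0 < γ) (hlamμ : 0 < lam + μ)
    (hζ : 0 ≤ ζ) (hα₀ : α₀ < (lam + μ) / (2 * γ * (lam + 2 * μ)))
    (h₁ : α₁ ∈ Set.Icc 0 α₀) (h₂ : α₂ ∈ Set.Icc 0 α₀) (h₃ : α₃ ∈ Set.Icc 0 α₀) :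
    γ * (α₂ + α₃ + 2 * ζ * α₂ * α₃)
      < ((lam + μ) / (lam + 2 * μ)) * ((1 + ζ * α₂) * (1 + ζ * α₃) / (1 + ζ * α₁)) :=
  stmt_12_general lam μ γ ζ α₀ α₁ α₂ α₃ hγ hζ hα₀ h₁ h₂ h₃
end
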